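/- Let Y be a real-valued random variable with all absolute moments finite and fix a nonzero real λ. Then for every real number x and every integer n≥0, 𝓔_{n,λ}^Y(x) = Σ_{j=0}^{n} Σ_{k=0}^{j} C(n,j) 𝓔_{n−j,λ}^Y ⟨x⟩_{k,λ} (−1)^{j−k} S_{1,λ}^Y(j,k), where C(n,j) is the binomial coefficient. -/

import Mathlib

open MeasureTheory Finset

noncomputable section

/-- The degenerate falling factorial `(x)_{n,λ} = x(x-λ)⋯(x-(n-1)λ)`. -/
def dff (lam x : ℝ) (n : ℕ) : ℝ := ∏ i ∈ Finset.range n, (x - i * lam)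

/-- The degenerate rising factorial `⟨x⟩_{n,λ} = x(x+λ)⋯(x+(n-1)λ)`. -/
def drf (lam x : ℝ) (n : ℕ) : ℝ := ∏ i ∈ Finset.range n, (x + i * lam)

/-- The ordinary falling factorial `(x)_n = x(x-1)⋯(x-n+1)`. -/
def ffall (x : ℝ) (n : ℕ) : ℝ := ∏ i ∈ Finset.range n, (x - i)

/-- The ordinary rising factorial `⟨x⟩_n = x(x+1)⋯(x+n-1)`. -/
def frise (x : ℝ) (n : ℕ) : ℝ := ∏ i ∈ Finset.range n, (x + i)

/-- Composition `f ∘ g` of formal power series, valid when `g` has zero constant term. -/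
def pscomp (f g : PowerSeries ℝ) : PowerSeries ℝ :=
  PowerSeries.mk fun n =>
    ∑ k ∈ Finset.range (n + 1), PowerSeries.coeff (R := ℝ) k f * PowerSeries.coeff (R := ℝ) n (g ^ k)

/-- The degenerate moment generating series `F_Y = Σ_{n≥0} E[(Y)_{n,λ}] X^n/n!`. -/
def momSeries (lam : ℝ) {Ω : Type*} [MeasurableSpace Ω] (μ : Measure Ω) (Y : Ω → ℝ) :
    PowerSeries ℝ :=
  PowerSeries.mk fun n => (∫ ω, dff lam (Y ω) n ∂μ) / (n.factorial : ℝ)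

/-- Taylor series at `u = 0` of the degenerate logarithm `log_λ(1+u)`:
`Σ_{n≥1} λ^{n-1} (1)_{n,1/λ} u^n/n!`. -/
def degLogSeries (lam : ℝ) : PowerSeries ℝ :=
  PowerSeries.mk fun n => if n = 0 then 0 else lam ^ (n - 1) * dff (1 / lam) 1 n / (n.factorial : ℝ)

/-- `G_Y`, the degenerate cumulant generating series `log_{-λ}(F_Y)`, i.e. the substitution of
`F_Y - 1` into the Taylor series of `log_{-λ}(1+u)`. -/
def cumSeries (lam : ℝ) {Ω : Type*} [MeasurableSpace Ω] (μ : Measure Ω) (Y : Ω → ℝ) :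
    PowerSeries ℝ :=
  pscomp (degLogSeries (-lam)) (momSeries lam μ Y - 1)

/-- The degenerate cumulants `κ_{n,λ}(Y) := n!·(coefficient of X^n in G_Y)`. -/
def degCumulant (lam : ℝ) {Ω : Type*} [MeasurableSpace Ω] (μ : Measure Ω) (Y : Ω → ℝ)
    (n : ℕ) : ℝ :=
  (n.factorial : ℝ) * PowerSeries.coeff (R := ℝ) n (cumSeries lam μ Y)

/-- The probabilistic degenerate Stirling numbers of the second kind
`{n brace k}_{Y,λ} := n!·(coefficient of X^n in (F_Y - 1)^k/k!)`. -/
def braceY (lam : ℝ) {Ω : Type*} [MeasurableSpace Ω] (μ : Measure Ω) (Y : Ω → ℝ)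
    (n k : ℕ) : ℝ :=
  (n.factorial : ℝ) * PowerSeries.coeff (R := ℝ) n ((momSeries lam μ Y - 1) ^ k) / (k.factorial : ℝ)

/-- The probabilistic degenerate Stirling numbers of the first kind, defined by
`(-1)^{n-k} S_{1,λ}^Y(n,k) := n!·(coefficient of X^n in G_Y^k/k!)`. -/
def S1Y (lam : ℝ) {Ω : Type*} [MeasurableSpace Ω] (μ : Measure Ω) (Y : Ω → ℝ)
    (n k : ℕ) : ℝ :=
  (-1 : ℝ) ^ (n - k) * ((n.factorial : ℝ) * PowerSeries.coeff (R := ℝ) n ((cumSeries lam μ Y) ^ k) / (k.factorial : ℝ))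

/-- Taylor series of `log(1+u)`: `Σ_{n≥1} (-1)^{n-1} u^n/n`. -/
def logSeries : PowerSeries ℝ :=
  PowerSeries.mk fun n => if n = 0 then 0 else (-1 : ℝ) ^ (n - 1) / n

/-- `F^x := exp (x · Log F)` for a power series `F` with constant term `1`. -/
def psPow (F : PowerSeries ℝ) (x : ℝ) : PowerSeries ℝ :=
  pscomp (PowerSeries.exp ℝ) (PowerSeries.C (R := ℝ) x * pscomp logSeries (F - 1))

/-- `F ↦ F/X`, i.e. the shift sending `Σ a_{n+1} X^{n+1}` (with `a_0 = 0`) to `Σ a_{n+1} X^n`. -/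
def shiftDown (F : PowerSeries ℝ) : PowerSeries ℝ :=
  PowerSeries.mk fun n => PowerSeries.coeff (R := ℝ) (n + 1) F

/-- The probabilistic degenerate Bernoulli polynomials associated with `Y`:
`Σ_{n≥0} β_{n,λ}^Y(x) X^n/n! = (X/(F_Y-1))·F_Y^x`. -/
def probBernoulli (lam : ℝ) {Ω : Type*} [MeasurableSpace Ω] (μ : Measure Ω) (Y : Ω → ℝ)
    (n : ℕ) (x : ℝ) : ℝ :=
  (n.factorial : ℝ) *
    PowerSeries.coeff (R := ℝ) n ((shiftDown (momSeries lam μ Y - 1))⁻¹ * psPow (momSeries lam μ Y) x)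

/-- The probabilistic degenerate Euler polynomials associated with `Y`:
`Σ_{n≥0} 𝓔_{n,λ}^Y(x) X^n/n! = (2/(F_Y+1))·F_Y^x`. -/
def probEuler (lam : ℝ) {Ω : Type*} [MeasurableSpace Ω] (μ : Measure Ω) (Y : Ω → ℝ)
    (n : ℕ) (x : ℝ) : ℝ :=
  (n.factorial : ℝ) *
    PowerSeries.coeff (R := ℝ) n
      (PowerSeries.C (R := ℝ) 2 * (momSeries lam μ Y + 1)⁻¹ * psPow (momSeries lam μ Y) x)

/-! Substituting `F_Y - 1` into the binomial series `exp (r log (1 + X)) = (1 + X)^r` gives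
`F_Y^{-λ} = 1 - λ G_Y`, since `ℓ_{-λ}(u) = ((1 + u)^{-λ} - 1)/(-λ)`.
As `log ∘ (exp - 1) = X`, powers compose:
`F_Y^x = (F_Y^{-λ})^{-x/λ} = Σ_k C(-x/λ, k) (-λ G_Y)^k = Σ_k ⟨x⟩_{k,λ} G_Y^k / k!`.
Multiplying by `2/(F_Y + 1)`, whose coefficients are the `𝓔_{m,λ}^Y / m!`, and comparing
coefficients of `X^n / n!` gives the formula. -/

open PowerSeries

theorem coeff_pow_eq_zero_of_lt {R : Type*} [CommSemiring R] {g : R⟦X⟧}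
    (hg : constantCoeff g = 0) {n k : ℕ} (h : n < k) : coeff n (g ^ k) = 0 :=
  coeff_of_lt_order _ ((Nat.cast_lt.2 h).trans_le (le_order_pow_of_constantCoeff_eq_zero k hg))

theorem pscomp_eq_subst (f : ℝ⟦X⟧) {g : ℝ⟦X⟧} (hg : constantCoeff g = 0) :
    pscomp f g = f.subst g := by
  ext n
  rw [coeff_subst' (HasSubst.of_constantCoeff_zero' hg), pscomp, coeff_mk,
    finsum_eq_sum_of_support_subset _ (s := Finset.range (n + 1))]
  · simp only [smul_eq_mul]
  · intro k hk
    by_contra h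
    simp only [Finset.coe_range, Set.mem_Iio, not_lt] at h
    exact hk (by simp only [coeff_pow_eq_zero_of_lt hg (Nat.lt_of_succ_le h), smul_zero])

theorem constantCoeff_subst_of_constantCoeff_eq_zero (f : ℝ⟦X⟧) {g : ℝ⟦X⟧}
    (hg : constantCoeff g = 0) : constantCoeff (f.subst g) = constantCoeff f := by
  rw [← pscomp_eq_subst f hg, ← coeff_zero_eq_constantCoeff_apply,
    ← coeff_zero_eq_constantCoeff_apply, pscomp, coeff_mk]
  simp

theorem logSeries_eq_log : logSeries = log ℝ := by
  ext n
  simp only [logSeries, coeff_mk, coeff_log]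
  split_ifs with h
  · rfl
  · obtain ⟨m, rfl⟩ := Nat.exists_eq_succ_of_ne_zero h
    push_cast [pow_succ]
    ring

theorem choose_eq_ffall_div (r : ℝ) (n : ℕ) : Ring.choose r n = ffall r n / n.factorial := by
  rw [Ring.choose_eq_smul, smul_eq_mul, ffall, ← descPochhammer_eval_eq_prod_range,
    ← Polynomial.aeval_eq_smeval, Polynomial.aeval_def, Polynomial.eval₂_eq_eval_map,
    descPochhammer_map, inv_mul_eq_div]

theorem coeff_one_add_X_mul {A : Type*} [Semiring A] (P : A⟦X⟧) (n : ℕ) :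
    coeff (n + 1) ((1 + X) * P) = coeff (n + 1) P + coeff n P := by
  rw [add_mul, one_mul, map_add, coeff_succ_X_mul]

theorem one_add_X_mul_derivative_log {A : Type*} [CommRing A] [Algebra ℚ A] :
    (1 + X) * d⁄dX A (log A) = 1 := by
  ext n
  cases n with
  | zero => simp [deriv_log]
  | succ n => simp [coeff_one_add_X_mul, deriv_log, pow_succ]

theorem coeff_one_add_X_mul_derivative {A : Type*} [CommRing A] (P : A⟦X⟧) (n : ℕ) :
    coeff n ((1 + X) * d⁄dX A P) = (n + 1) * coeff (n + 1) P + n * coeff n P := by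
  cases n with
  | zero =>
    rw [add_mul, one_mul, map_add, coeff_zero_X_mul, add_zero, coeff_derivative]
    simp
  | succ n => rw [coeff_one_add_X_mul, coeff_derivative, coeff_derivative]; push_cast; ring

theorem eq_binomialSeries_of_one_add_X_mul_derivative {P : ℝ⟦X⟧} {r : ℝ}
    (hP : (1 + X) * d⁄dX ℝ P = C r * P) (h0 : constantCoeff P = 1) :
    P = PowerSeries.binomialSeries ℝ r := by
  ext n
  induction n with
  | zero => simpa using h0
  | succ n ih =>
    have hrec := congrArg (coeff n) hP
    rw [coeff_one_add_X_mul_derivative, coeff_C_mul, ih] at hrec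
    simp only [PowerSeries.binomialSeries_coeff, smul_eq_mul, mul_one, choose_eq_ffall_div]
      at hrec ⊢
    rw [ffall, Finset.prod_range_succ, ← ffall, Nat.factorial_succ, Nat.cast_mul,
      eq_div_iff (by positivity)]
    field_simp at hrec
    push_cast
    linear_combination hrec

theorem exp_subst_smul_log (r : ℝ) :
    (exp ℝ).subst (r • log ℝ) = PowerSeries.binomialSeries ℝ r := by
  have hs : HasSubst (r • log ℝ) := HasSubst.log.smul' r
  apply eq_binomialSeries_of_one_add_X_mul_derivative
  · rw [derivative_subst hs, derivative_exp, Derivation.map_smul,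
      smul_eq_C_mul (d⁄dX ℝ (log ℝ))]
    linear_combination
      (C r * (exp ℝ).subst (r • log ℝ)) * one_add_X_mul_derivative_log (A := ℝ)
  · rw [constantCoeff_subst_of_constantCoeff_eq_zero _ (by simp), constantCoeff_exp]

theorem log_subst_exp_sub_one : (log ℝ).subst (exp ℝ - 1) = X := by
  have hs : HasSubst (exp ℝ - 1) := HasSubst.exp_sub_one
  have hinv : exp ℝ * (d⁄dX ℝ (log ℝ)).subst (exp ℝ - 1) = 1 := by
    have := congrArg (subst (exp ℝ - 1)) (one_add_X_mul_derivative_log (A := ℝ))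
    rwa [subst_mul hs, subst_add hs, subst_X hs, ← coe_substAlgHom hs, map_one,
      add_sub_cancel, coe_substAlgHom] at this
  apply derivative.ext
  · rw [derivative_subst hs, map_sub, derivative_exp, derivative_one, sub_zero, derivative_X,
      mul_comm, hinv]
  · rw [constantCoeff_subst_of_constantCoeff_eq_zero _ (by simp [constantCoeff_exp])]
    simp

section psPow

variable {F : ℝ⟦X⟧} (hF : constantCoeff F = 1)
include hF

theorem constantCoeff_sub_one_eq_zero : constantCoeff (F - 1) = 0 := by
  rw [map_sub, hF, map_one, sub_self]

theorem constantCoeff_smul_logOf (r : ℝ) : constantCoeff (r • logOf F) = 0 := by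
  rw [constantCoeff_smul, constantCoeff_logOf hF, smul_zero]

theorem psPow_eq_exp_subst (x : ℝ) : psPow F x = (exp ℝ).subst (x • logOf F) := by
  rw [psPow, pscomp_eq_subst logSeries (constantCoeff_sub_one_eq_zero hF), logSeries_eq_log,
    ← logOf_eq, ← smul_eq_C_mul, pscomp_eq_subst _ (constantCoeff_smul_logOf hF x)]

theorem constantCoeff_psPow (x : ℝ) : constantCoeff (psPow F x) = 1 := by
  rw [psPow_eq_exp_subst hF,
    constantCoeff_subst_of_constantCoeff_eq_zero _ (constantCoeff_smul_logOf hF x),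
    constantCoeff_exp]

theorem psPow_eq_binomialSeries_subst (r : ℝ) :
    psPow F r = (PowerSeries.binomialSeries ℝ r).subst (F - 1) := by
  have hA := HasSubst.of_constantCoeff_zero' (constantCoeff_sub_one_eq_zero hF)
  rw [psPow_eq_exp_subst hF, ← exp_subst_smul_log,
    subst_comp_subst_apply (HasSubst.log.smul' r) hA, subst_smul hA, logOf_eq]

theorem logOf_psPow (r : ℝ) : logOf (psPow F r) = r • logOf F := by
  have hs := HasSubst.of_constantCoeff_zero' (constantCoeff_smul_logOf hF r)
  have hexp : (exp ℝ).subst (r • logOf F) - 1 = (exp ℝ - 1).subst (r • logOf F) := by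
    rw [subst_sub hs, ← coe_substAlgHom hs, map_one]
  rw [logOf_eq, psPow_eq_exp_subst hF, hexp, ← subst_comp_subst_apply HasSubst.exp_sub_one hs,
    log_subst_exp_sub_one, subst_X hs]

theorem psPow_mul (r s : ℝ) : psPow F (r * s) = psPow (psPow F r) s := by
  rw [psPow_eq_exp_subst hF, psPow_eq_exp_subst (constantCoeff_psPow hF r), logOf_psPow hF,
    smul_smul, mul_comm]

end psPow

section degenerate

variable {lam : ℝ} (hlam : lam ≠ 0)
include hlam

theorem pow_mul_dff_one_div (n : ℕ) : lam ^ n * dff (1 / lam) 1 n = ffall lam n := by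
  rw [dff, ffall, ← Finset.card_range n, ← Finset.prod_const, Finset.card_range,
    ← Finset.prod_mul_distrib]
  refine Finset.prod_congr rfl fun i _ => ?_
  field_simp

theorem drf_eq_ffall_mul_pow (x : ℝ) (k : ℕ) :
    drf lam x k = ffall (-(x / lam)) k * (-lam) ^ k := by
  rw [drf, ffall, ← Finset.card_range k, ← Finset.prod_const, Finset.card_range,
    ← Finset.prod_mul_distrib]
  refine Finset.prod_congr rfl fun i _ => ?_
  field_simp
  ring

theorem C_mul_degLogSeries :
    C lam * degLogSeries lam = PowerSeries.binomialSeries ℝ lam - 1 := by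
  ext n
  rw [coeff_C_mul, degLogSeries, coeff_mk, map_sub, PowerSeries.binomialSeries_coeff,
    choose_eq_ffall_div, smul_eq_mul, mul_one, coeff_one]
  rcases n with _ | n
  · simp [ffall]
  · rw [if_neg n.succ_ne_zero, if_neg n.succ_ne_zero, sub_zero, ← pow_mul_dff_one_div hlam,
      Nat.add_sub_cancel, pow_succ]
    ring

theorem psPow_eq_one_add_C_mul_pscomp_degLogSeries {F : ℝ⟦X⟧} (hF : constantCoeff F = 1) :
    psPow F lam = 1 + C lam * pscomp (degLogSeries lam) (F - 1) := by
  have hA := HasSubst.of_constantCoeff_zero' (constantCoeff_sub_one_eq_zero hF)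
  rw [psPow_eq_binomialSeries_subst hF, pscomp_eq_subst _ (constantCoeff_sub_one_eq_zero hF),
    ← sub_eq_iff_eq_add', ← smul_eq_C_mul, ← subst_smul hA, smul_eq_C_mul,
    C_mul_degLogSeries hlam, subst_sub hA, ← coe_substAlgHom hA, map_one]

theorem coeff_psPow_eq_sum {F : ℝ⟦X⟧} (hF : constantCoeff F = 1) (x : ℝ) (j : ℕ) :
    coeff j (psPow F x) = ∑ k ∈ Finset.range (j + 1),
      drf lam x k / k.factorial * coeff j (pscomp (degLogSeries (-lam)) (F - 1) ^ k) := by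
  have hF' := constantCoeff_psPow hF (-lam)
  have hx : psPow F x = pscomp (PowerSeries.binomialSeries ℝ (-(x / lam)))
      (C (-lam) * pscomp (degLogSeries (-lam)) (F - 1)) := by
    have hG : C (-lam) * pscomp (degLogSeries (-lam)) (F - 1) = psPow F (-lam) - 1 := by
      rw [psPow_eq_one_add_C_mul_pscomp_degLogSeries (neg_ne_zero.2 hlam) hF, add_sub_cancel_left]
    rw [hG, pscomp_eq_subst _ (constantCoeff_sub_one_eq_zero hF'),
      ← psPow_eq_binomialSeries_subst hF', ← psPow_mul hF]
    congr 1
    field_simp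
  rw [hx, pscomp, coeff_mk]
  refine Finset.sum_congr rfl fun k _ => ?_
  rw [PowerSeries.binomialSeries_coeff, choose_eq_ffall_div, smul_eq_mul, mul_one, mul_pow,
    ← map_pow, coeff_C_mul, drf_eq_ffall_mul_pow hlam]
  ring

end degenerate

theorem psPow_zero {F : ℝ⟦X⟧} (hF : constantCoeff F = 1) : psPow F 0 = 1 := by
  have hA := HasSubst.of_constantCoeff_zero' (constantCoeff_sub_one_eq_zero hF)
  rw [psPow_eq_binomialSeries_subst hF, PowerSeries.binomialSeries_zero, ← coe_substAlgHom hA,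
    map_one]

theorem factorial_mul_coeff_mul {R : Type*} [CommSemiring R] (f g : R⟦X⟧) (n : ℕ) :
    n.factorial * coeff n (f * g) = ∑ j ∈ Finset.range (n + 1),
      n.choose j * ((n - j).factorial * coeff (n - j) f) * (j.factorial * coeff j g) := by
  rw [mul_comm f g, coeff_mul,
    Finset.Nat.sum_antidiagonal_eq_sum_range_succ (fun j i => coeff j g * coeff i f), mul_sum]
  refine Finset.sum_congr rfl fun j hj => ?_
  rw [← Nat.choose_mul_factorial_mul_factorial (Nat.lt_succ_iff.1 (Finset.mem_range.1 hj))]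
  push_cast
  ring

theorem constantCoeff_momSeries {Ω : Type*} [MeasurableSpace Ω] (μ : Measure Ω)
    [IsProbabilityMeasure μ] (lam : ℝ) (Y : Ω → ℝ) :
    constantCoeff (momSeries lam μ Y) = 1 := by
  simp [← coeff_zero_eq_constantCoeff_apply, momSeries, dff]

theorem neg_one_pow_mul_S1Y {Ω : Type*} [MeasurableSpace Ω] (μ : Measure Ω) (lam : ℝ)
    (Y : Ω → ℝ) (n k : ℕ) :
    (-1) ^ (n - k) * S1Y lam μ Y n k =
      n.factorial * coeff n (cumSeries lam μ Y ^ k) / k.factorial := by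
  rw [S1Y, ← mul_assoc, ← pow_add, Even.neg_one_pow ⟨_, rfl⟩, one_mul, mul_div_assoc]

theorem probEuler_eq_sum_S1Y_general {Ω : Type*} [MeasurableSpace Ω] (μ : MeasureTheory.Measure Ω)
    [MeasureTheory.IsProbabilityMeasure μ] (Y : Ω → ℝ)
    (lam : ℝ) (hlam : lam ≠ 0)
    (x : ℝ) (n : ℕ) :
    probEuler lam μ Y n x =
      ∑ j ∈ Finset.range (n + 1), ∑ k ∈ Finset.range (j + 1),
        (n.choose j : ℝ) * probEuler lam μ Y (n - j) 0 * drf lam x k *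
          (-1 : ℝ) ^ (j - k) * S1Y lam μ Y j k := by
  have hF := constantCoeff_momSeries μ lam Y
  rw [probEuler, factorial_mul_coeff_mul]
  refine Finset.sum_congr rfl fun j _ => ?_
  rw [probEuler, psPow_zero hF, mul_one, coeff_psPow_eq_sum hlam hF x j, mul_sum, mul_sum]
  refine Finset.sum_congr rfl fun k _ => ?_
  rw [mul_assoc _ ((-1 : ℝ) ^ (j - k)), neg_one_pow_mul_S1Y, cumSeries]
  ring

theorem probEuler_eq_sum_S1Y {Ω : Type*} [MeasurableSpace Ω] (μ : MeasureTheory.Measure Ω)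
    [MeasureTheory.IsProbabilityMeasure μ] (Y : Ω → ℝ) (hY : Measurable Y)
    (hmom : ∀ n : ℕ, MeasureTheory.Integrable (fun ω => |Y ω| ^ n) μ)
    (lam : ℝ) (hlam : lam ≠ 0)
    (x : ℝ) (n : ℕ) :
    probEuler lam μ Y n x =
      ∑ j ∈ Finset.range (n + 1), ∑ k ∈ Finset.range (j + 1),
        (n.choose j : ℝ) * probEuler lam μ Y (n - j) 0 * drf lam x k *
          (-1 : ℝ) ^ (j - k) * S1Y lam μ Y j k :=
  probEuler_eq_sum_S1Y_general μ Y lam hlam x n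

end
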